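/- arXiv:2106.14600 — 2 statements merged into one kernel-verified Lean document; each statement's English description precedes it below -/
import Mathlib

section
/- The map h from the group Triv of trivial autohomeomorphisms of ℕ* to ℤ, defined by h(φ*) = |ℕ \ ran φ| − |ℕ \ dom φ| for any bijection φ between cofinite subsets of ℕ representing φ*, is a well-defined surjective group homomorphism. -/
/-- The space ℕ* : free ultrafilters on ℕ. -/
abbrev FreeUF : Type := {u : Ultrafilter ℕ // (u : Filter ℕ) ≤ Filter.cofinite}

/-- A bijection of ℕ* is trivial if it is induced by a bijection between
cofinite subsets of ℕ (represented by a total function). -/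
def IsTrivial (e : Equiv.Perm FreeUF) : Prop :=
  ∃ (f : ℕ → ℕ) (A B : Set ℕ), Aᶜ.Finite ∧ Bᶜ.Finite ∧ Set.BijOn f A B ∧
    ∀ u : FreeUF, ((e u : FreeUF) : Ultrafilter ℕ) = Ultrafilter.map f (u : Ultrafilter ℕ)

/-! Write `ind φ = |ℕ \ ran φ| − |ℕ \ dom φ|` for a bijection `φ` between cofinite sets.
Restricting `φ` to a cofinite part of its domain leaves `ind φ` unchanged, as it removes equally
many points from the domain and from the range. Two representatives of the same `φ*` agree off a
finite set: otherwise they differ on an infinite set `T` on which their images are disjoint, and a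
free ultrafilter containing `T` is sent to different points. So `h` is well defined. A composite
of representatives represents the product, and restricting both factors to the cofinite set
through which the composite passes gives additivity. The shifts `n ↦ n + k` and `n ↦ n - k`
(on `[k, ∞)`) have index `k` and `-k`. -/

open Set Filter

section CofiniteIndex

variable {α β γ : Type*}

/-- For a bijection `φ : A → B` this is the paper's `|ℕ \ ran φ| − |ℕ \ dom φ|`. -/
noncomputable def cofiniteIndex (A : Set α) (B : Set β) : ℤ :=
  (Bᶜ.ncard : ℤ) - (Aᶜ.ncard : ℤ)

lemma Set.InjOn.finite_inter_preimage {f : α → β} {A : Set α} {s : Set β} (hf : InjOn f A)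
    (hs : s.Finite) : (A ∩ f ⁻¹' s).Finite :=
  Finite.of_injOn (f := f) (fun _ hx => hx.2) (hf.mono inter_subset_left) hs

lemma Set.InjOn.finite_compl_inter_preimage {f : α → β} {A : Set α} {C : Set β}
    (hf : InjOn f A) (hA : Aᶜ.Finite) (hC : Cᶜ.Finite) : (A ∩ f ⁻¹' C)ᶜ.Finite := by
  rw [compl_inter, ← preimage_compl]
  refine (hA.union (hf.finite_inter_preimage hC)).subset fun x hx => ?_
  by_cases hxA : x ∈ A
  · exact .inr ⟨hxA, hx.resolve_left (not_not.2 hxA)⟩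
  · exact .inl hxA

lemma Set.BijOn.finite_compl_image {f : α → β} {A E : Set α} {B : Set β} (hf : BijOn f A B)
    (hEA : E ⊆ A) (hE : Eᶜ.Finite) (hB : Bᶜ.Finite) : (f '' E)ᶜ.Finite := by
  refine (hB.union ((hE.subset (fun _ hx => hx.2 : A \ E ⊆ Eᶜ)).image f)).subset fun y hy => ?_
  by_cases hyB : y ∈ B
  · rw [← hf.image_eq] at hyB
    exact .inr (hf.injOn.image_sdiff_subset hEA ▸ ⟨hyB, hy⟩)
  · exact .inl hyB

lemma Set.BijOn.cofiniteIndex_image {f : α → β} {A E : Set α} {B : Set β} (hf : BijOn f A B)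
    (hEA : E ⊆ A) (hE : Eᶜ.Finite) (hB : Bᶜ.Finite) :
    cofiniteIndex E (f '' E) = cofiniteIndex A B := by
  have hfEB : f '' E ⊆ B := hf.image_eq ▸ image_mono hEA
  have hcard : (A \ E).ncard = (B \ f '' E).ncard := by
    rw [← hf.image_eq, ← hf.injOn.image_sdiff_subset hEA,
      (hf.injOn.mono sdiff_subset).ncard_image]
  have hAE : ((A \ E).ncard : ℤ) = Eᶜ.ncard - Aᶜ.ncard := by
    rw [← compl_sdiff_compl]
    exact cast_ncard_sdiff (compl_subset_compl.2 hEA) hE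
  have hBE : ((B \ f '' E).ncard : ℤ) = (f '' E)ᶜ.ncard - Bᶜ.ncard := by
    rw [← compl_sdiff_compl]
    exact cast_ncard_sdiff (compl_subset_compl.2 hfEB) (hf.finite_compl_image hEA hE hB)
  unfold cofiniteIndex
  omega

lemma Set.BijOn.cofiniteIndex_comp {f : α → β} {g : β → γ} {A : Set α} {B C : Set β}
    {D : Set γ} (hf : BijOn f A B) (hg : BijOn g C D) (hA : Aᶜ.Finite) (hB : Bᶜ.Finite)
    (hC : Cᶜ.Finite) (hD : Dᶜ.Finite) :
    cofiniteIndex (A ∩ f ⁻¹' C) ((g ∘ f) '' (A ∩ f ⁻¹' C)) =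
      cofiniteIndex A B + cofiniteIndex C D := by
  set E := A ∩ f ⁻¹' C
  have hE : Eᶜ.Finite := hf.injOn.finite_compl_inter_preimage hA hC
  have hfEC : f '' E ⊆ C := (image_inter_preimage f A C).trans_subset inter_subset_right
  have hfE : (f '' E)ᶜ.Finite := hf.finite_compl_image inter_subset_left hE hB
  rw [image_comp, ← hf.cofiniteIndex_image inter_subset_left hE hB,
    ← hg.cofiniteIndex_image hfEC hfE hD]
  unfold cofiniteIndex
  ring

end CofiniteIndex

section FreeUltrafilters

variable {α β : Type*}

lemma Set.InjOn.tendsto_cofinite {f : α → β} {A : Set α} (hA : Aᶜ.Finite) (hf : InjOn f A) :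
    Tendsto f cofinite cofinite := fun s hs =>
  (hA.union (hf.finite_inter_preimage hs)).subset fun x hx => by
    by_cases hxA : x ∈ A
    · exact .inr ⟨hxA, hx⟩
    · exact .inl hxA

lemma Ultrafilter.map_le_cofinite {f : α → β} {A : Set α} {u : Ultrafilter α}
    (hA : Aᶜ.Finite) (hf : InjOn f A) (hu : (u : Filter α) ≤ cofinite) :
    (u.map f : Filter β) ≤ cofinite := by
  rw [coe_map]
  exact (map_mono hu).trans (hf.tendsto_cofinite hA)

lemma Ultrafilter.map_map_eq_self {f : α → β} {g : β → α} {A : Set α} {u : Ultrafilter α}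
    (h : LeftInvOn g f A) (hA : A ∈ u) : (u.map f).map g = u := by
  rw [map_map]
  have hgf : g ∘ f =ᶠ[u] id := mem_of_superset hA h
  exact coe_injective (by rw [coe_map, Filter.map_congr hgf, Filter.map_id])

lemma Set.Infinite.exists_ultrafilter_le_cofinite {T : Set α} (hT : T.Infinite) :
    ∃ u : Ultrafilter α, (u : Filter α) ≤ cofinite ∧ T ∈ u := by
  have := hT.cofinite_inf_principal_neBot
  obtain ⟨u, hu⟩ := exists_ultrafilter_le (cofinite ⊓ 𝓟 T)
  exact ⟨u, (le_inf_iff.1 hu).1, le_principal_iff.1 (le_inf_iff.1 hu).2⟩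

lemma Set.Infinite.exists_infinite_subset_disjoint_image {S : Set α} {f g : α → β}
    (hS : S.Infinite) (hf : InjOn f S) (hg : InjOn g S) (hne : ∀ x ∈ S, f x ≠ g x) :
    ∃ T ⊆ S, T.Infinite ∧ Disjoint (f '' T) (g '' T) := by
  obtain ⟨a, haS, ha⟩ := exists_seq_of_forall_finset_exists (· ∈ S)
    (fun x y => x ≠ y ∧ f x ≠ g y ∧ g x ≠ f y) fun F _ => by
      have hbad := F.finite_toSet.union ((hg.finite_inter_preimage (F.finite_toSet.image f)).union
        (hf.finite_inter_preimage (F.finite_toSet.image g)))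
      obtain ⟨y, hyS, hy⟩ := (hS.sdiff hbad).nonempty
      refine ⟨y, hyS, fun x hx => ⟨?_, ?_, ?_⟩⟩
      · rintro rfl
        exact hy (.inl hx)
      · intro hxy
        exact hy (.inr (.inl ⟨hyS, x, hx, hxy⟩))
      · intro hxy
        exact hy (.inr (.inr ⟨hyS, x, hx, hxy⟩))
  refine ⟨range a, range_subset_iff.2 haS,
    infinite_range_of_injective (.of_lt_imp_ne fun m n h => (ha m n h).1), ?_⟩
  rw [disjoint_left]
  rintro _ ⟨_, ⟨m, rfl⟩, rfl⟩ ⟨_, ⟨n, rfl⟩, hnm⟩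
  rcases lt_trichotomy m n with h | rfl | h
  · exact (ha m n h).2.1 hnm.symm
  · exact hne _ (haS m) hnm.symm
  · exact (ha n m h).2.2 hnm

/-- A free ultrafilter containing an infinite set on which `f` and `g` have disjoint images
separates `u.map f` from `u.map g`. -/
lemma Set.InjOn.finite_setOf_ne_of_map_eq {f g : α → β} {A : Set α} (hf : InjOn f A)
    (hg : InjOn g A)
    (h : ∀ u : Ultrafilter α, (u : Filter α) ≤ cofinite → u.map f = u.map g) :
    {x ∈ A | f x ≠ g x}.Finite := by
  by_contra hinf
  obtain ⟨T, hTS, hT, hdisj⟩ := Set.Infinite.exists_infinite_subset_disjoint_image hinf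
    (hf.mono (sep_subset _ _)) (hg.mono (sep_subset _ _)) fun x hx => hx.2
  obtain ⟨u, hu, hTu⟩ := hT.exists_ultrafilter_le_cofinite
  have hfT : f '' T ∈ u.map g :=
    h u hu ▸ Ultrafilter.mem_map.2 (mem_of_superset hTu (subset_preimage_image f T))
  obtain ⟨x, hxT, hx⟩ := Ultrafilter.nonempty_of_mem (inter_mem hTu (Ultrafilter.mem_map.1 hfT))
  exact disjoint_left.1 hdisj hx (mem_image_of_mem g hxT)

end FreeUltrafilters

section TrivialAutohomeomorphisms

def IsInducedBy (e : Equiv.Perm FreeUF) (f : ℕ → ℕ) (A B : Set ℕ) : Prop :=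
  Aᶜ.Finite ∧ Bᶜ.Finite ∧ BijOn f A B ∧
    ∀ u : FreeUF, ((e u : FreeUF) : Ultrafilter ℕ) = Ultrafilter.map f (u : Ultrafilter ℕ)

lemma isTrivial_iff {e : Equiv.Perm FreeUF} : IsTrivial e ↔ ∃ f A B, IsInducedBy e f A B :=
  Iff.rfl

lemma exists_isInducedBy {f : ℕ → ℕ} {A B : Set ℕ} (hA : Aᶜ.Finite) (hB : Bᶜ.Finite)
    (hf : BijOn f A B) : ∃ e, IsInducedBy e f A B := by
  have hinv : InvOn (Function.invFunOn f A) f A B := hf.invOn_invFunOn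
  have hf' : BijOn (Function.invFunOn f A) B A := hf.symm hinv.symm
  let e : Equiv.Perm FreeUF :=
    { toFun u := ⟨u.1.map f, u.1.map_le_cofinite hA hf.injOn u.2⟩
      invFun u := ⟨u.1.map (Function.invFunOn f A), u.1.map_le_cofinite hB hf'.injOn u.2⟩
      left_inv u := Subtype.ext (Ultrafilter.map_map_eq_self hinv.1 (u.2 hA))
      right_inv u := Subtype.ext (Ultrafilter.map_map_eq_self hinv.2 (u.2 hB)) }
  exact ⟨e, hA, hB, hf, fun _ => rfl⟩

lemma IsInducedBy.cofiniteIndex_eq {e : Equiv.Perm FreeUF} {f g : ℕ → ℕ} {A B C D : Set ℕ}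
    (hef : IsInducedBy e f A B) (heg : IsInducedBy e g C D) :
    cofiniteIndex A B = cofiniteIndex C D := by
  obtain ⟨hA, hB, hf, hef⟩ := hef
  obtain ⟨hC, hD, hg, heg⟩ := heg
  have hne : {x ∈ A ∩ C | f x ≠ g x}.Finite :=
    (hf.injOn.mono inter_subset_left).finite_setOf_ne_of_map_eq
      (hg.injOn.mono inter_subset_right) fun u hu => (hef ⟨u, hu⟩).symm.trans (heg ⟨u, hu⟩)
  set E := {x ∈ A ∩ C | f x = g x}
  have hE : Eᶜ.Finite := ((hA.union hC).union hne).subset fun x hx => by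
    simp only [E, mem_compl_iff, mem_ofPred_eq, mem_inter_iff, mem_union] at hx ⊢
    tauto
  rw [← hf.cofiniteIndex_image (fun x hx => hx.1.1) hE hB,
    ← hg.cofiniteIndex_image (fun x hx => hx.1.2) hE hD, image_congr fun x hx => hx.2]

lemma IsInducedBy.mul {e₁ e₂ : Equiv.Perm FreeUF} {f g : ℕ → ℕ} {A B C D : Set ℕ}
    (he₁ : IsInducedBy e₁ g C D) (he₂ : IsInducedBy e₂ f A B) :
    IsInducedBy (e₁ * e₂) (g ∘ f) (A ∩ f ⁻¹' C) ((g ∘ f) '' (A ∩ f ⁻¹' C)) := by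
  obtain ⟨hC, hD, hg, he₁⟩ := he₁
  obtain ⟨hA, hB, hf, he₂⟩ := he₂
  have hE : (A ∩ f ⁻¹' C)ᶜ.Finite := hf.injOn.finite_compl_inter_preimage hA hC
  refine ⟨hE, ?_, (hg.injOn.comp (hf.injOn.mono inter_subset_left) fun _ hx => hx.2).bijOn_image,
    fun u => by rw [Equiv.Perm.mul_apply, he₁, he₂, Ultrafilter.map_map]⟩
  rw [image_comp]
  exact hg.finite_compl_image ((image_inter_preimage f A C).trans_subset inter_subset_right)
    (hf.finite_compl_image inter_subset_left hE hB) hD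

/-- The paper's `h`; `Classical.epsilon` gives it a junk value on nontrivial permutations. -/
noncomputable def trivIndex (e : Equiv.Perm FreeUF) : ℤ :=
  Classical.epsilon fun k => ∃ f A B, IsInducedBy e f A B ∧ cofiniteIndex A B = k

lemma IsInducedBy.trivIndex_eq {e : Equiv.Perm FreeUF} {f : ℕ → ℕ} {A B : Set ℕ}
    (he : IsInducedBy e f A B) : trivIndex e = cofiniteIndex A B := by
  obtain ⟨g, C, D, heg, hk⟩ := Classical.epsilon_spec (⟨_, f, A, B, he, rfl⟩ :
    ∃ k, ∃ f A B, IsInducedBy e f A B ∧ cofiniteIndex A B = k)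
  exact hk.symm.trans (heg.cofiniteIndex_eq he)

lemma trivIndex_mul {e₁ e₂ : Equiv.Perm FreeUF}
    (he₁ : IsTrivial e₁) (he₂ : IsTrivial e₂) :
    trivIndex (e₁ * e₂) = trivIndex e₁ + trivIndex e₂ := by
  obtain ⟨g, C, D, he₁⟩ := isTrivial_iff.1 he₁
  obtain ⟨f, A, B, he₂⟩ := isTrivial_iff.1 he₂
  rw [(he₁.mul he₂).trivIndex_eq, he₁.trivIndex_eq, he₂.trivIndex_eq,
    he₂.2.2.1.cofiniteIndex_comp he₁.2.2.1 he₂.1 he₂.2.1 he₁.1 he₁.2.1, add_comm]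

lemma exists_isTrivial_trivIndex_eq {f : ℕ → ℕ} {A B : Set ℕ} (hA : Aᶜ.Finite)
    (hB : Bᶜ.Finite) (hf : BijOn f A B) :
    ∃ e, IsTrivial e ∧ trivIndex e = cofiniteIndex A B :=
  let ⟨e, he⟩ := exists_isInducedBy hA hB hf
  ⟨e, ⟨f, A, B, he⟩, he.trivIndex_eq⟩

lemma trivIndex_surjective (k : ℤ) : ∃ e, IsTrivial e ∧ trivIndex e = k := by
  have hshift (n : ℕ) : BijOn (· + n) univ (Ici n) :=
    ⟨fun x _ => Nat.le_add_left n x, (add_left_injective n).injOn,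
      fun y hy => ⟨y - n, trivial, Nat.sub_add_cancel hy⟩⟩
  have hunshift (n : ℕ) : BijOn (· - n) (Ici n) univ :=
    (hshift n).symm ⟨fun y hy => Nat.sub_add_cancel hy, fun x _ => Nat.add_sub_cancel x n⟩
  have hIci (n : ℕ) : (Ici n)ᶜ.Finite := compl_Ici (a := n) ▸ finite_Iio n
  obtain ⟨n, rfl | rfl⟩ := Int.eq_nat_or_neg k
  · simpa [cofiniteIndex] using exists_isTrivial_trivIndex_eq (by simp) (hIci n) (hshift n)
  · simpa [cofiniteIndex] using exists_isTrivial_trivIndex_eq (hIci n) (by simp) (hunshift n)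

end TrivialAutohomeomorphisms

/-- The map h : Triv → ℤ, h(φ*) = |ℕ \ ran φ| − |ℕ \ dom φ| for any
representative φ, is well defined on the trivial autohomeomorphisms of ℕ*, is a
group homomorphism, and is surjective (onto ℤ, with trivial preimages). -/
theorem h_hom_exists :
    ∃ H : Equiv.Perm FreeUF → ℤ,
      (∀ (e : Equiv.Perm FreeUF) (f : ℕ → ℕ) (A B : Set ℕ),
          Aᶜ.Finite → Bᶜ.Finite → Set.BijOn f A B →
          (∀ u : FreeUF, ((e u : FreeUF) : Ultrafilter ℕ) = Ultrafilter.map f (u : Ultrafilter ℕ)) →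
          H e = (Bᶜ.ncard : ℤ) - (Aᶜ.ncard : ℤ)) ∧
      (∀ e₁ e₂ : Equiv.Perm FreeUF, IsTrivial e₁ → IsTrivial e₂ →
          H (e₁ * e₂) = H e₁ + H e₂) ∧
      (∀ k : ℤ, ∃ e : Equiv.Perm FreeUF, IsTrivial e ∧ H e = k) :=
  ⟨trivIndex, fun _ _ _ _ hA hB hf he => IsInducedBy.trivIndex_eq ⟨hA, hB, hf, he⟩,
    fun _ _ => trivIndex_mul, trivIndex_surjective⟩
end

section
/- The shift autohomeomorphism σ* of ℕ* (induced by n ↦ n+1) and its inverse (σ*)⁻¹ are not conjugate in the group Triv of trivial autohomeomorphisms of ℕ*. -/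
open Filter Set Function

variable {α β : Type*}

theorem Set.Infinite.exists_infinite_subset_disjoint_image_s7 {F G : α → β} {D : Set α}
    (hD : D.Infinite) (hF : InjOn F D) (hG : InjOn G D) (hne : ∀ x ∈ D, F x ≠ G x) :
    ∃ S ⊆ D, S.Infinite ∧ Disjoint (F '' S) (G '' S) := by
  have finite_inter_preimage : ∀ {H : α → β}, InjOn H D → ∀ {t : Set β}, t.Finite →
      (D ∩ H ⁻¹' t).Finite := fun hH _ ht =>
    (ht.subset (image_subset_iff.2 inter_subset_right)).of_finite_image (hH.mono inter_subset_left)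
  have extend : ∀ s : Finset α, (∀ x ∈ s, x ∈ D) →
      ∃ y, y ∈ D ∧ ∀ x ∈ s, x ≠ y ∧ F x ≠ G y ∧ G x ≠ F y := by
    intro s _
    have hbad : ((s : Set α) ∪ D ∩ G ⁻¹' (F '' s) ∪ D ∩ F ⁻¹' (G '' s)).Finite :=
      (s.finite_toSet.union (finite_inter_preimage hG (s.finite_toSet.image F))).union
        (finite_inter_preimage hF (s.finite_toSet.image G))
    obtain ⟨y, hyD, hy⟩ := (hD.sdiff hbad).nonempty
    refine ⟨y, hyD, fun x hx => ⟨?_, ?_, ?_⟩⟩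
    · rintro rfl
      exact hy (Or.inl (Or.inl hx))
    · intro hxy
      exact hy (Or.inl (Or.inr ⟨hyD, x, hx, hxy⟩))
    · intro hxy
      exact hy (Or.inr ⟨hyD, x, hx, hxy⟩)
  obtain ⟨x, hxD, hx⟩ := exists_seq_of_forall_finset_exists (· ∈ D) _ extend
  have hinj : Injective x := Injective.of_lt_imp_ne fun m n hmn => (hx m n hmn).1
  refine ⟨range x, range_subset_iff.2 hxD, infinite_range_of_injective hinj, ?_⟩
  rw [Set.disjoint_left]
  rintro _ ⟨_, ⟨m, rfl⟩, rfl⟩ ⟨_, ⟨n, rfl⟩, h⟩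
  rcases lt_trichotomy m n with hmn | rfl | hmn
  · exact (hx m n hmn).2.1 h.symm
  · exact hne _ (hxD m) h.symm
  · exact (hx n m hmn).2.2 h

theorem eventuallyEq_cofinite_of_ultrafilter_map_eq {F G : α → β} {A : Set α}
    (hA : A ∈ cofinite) (hF : InjOn F A) (hG : InjOn G A)
    (h : ∀ u : Ultrafilter α, (u : Filter α) ≤ cofinite → u.map F = u.map G) :
    F =ᶠ[cofinite] G := by
  by_contra hne
  have hD : ({x | F x ≠ G x} \ Aᶜ).Infinite :=
    Infinite.sdiff (by simpa [EventuallyEq, eventually_cofinite] using hne) hA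
  have hDA : {x | F x ≠ G x} \ Aᶜ ⊆ A := fun _ hx => not_not.1 hx.2
  obtain ⟨S, -, hS, hdisj⟩ :=
    hD.exists_infinite_subset_disjoint_image_s7 (hF.mono hDA) (hG.mono hDA) fun _ hx => hx.1
  have := hS.cofinite_inf_principal_neBot
  obtain ⟨u, hu⟩ := Ultrafilter.exists_le (cofinite ⊓ 𝓟 S)
  have hSu : S ∈ u := le_principal_iff.1 (hu.trans inf_le_right)
  have hFS : F '' S ∈ u.map F := show F '' S ∈ map F ↑u from image_mem_map hSu
  have hGS : G '' S ∈ u.map F :=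
    h u (hu.trans inf_le_left) ▸ show G '' S ∈ map G ↑u from image_mem_map hSu
  obtain ⟨y, hyF, hyG⟩ := Ultrafilter.nonempty_of_mem (inter_mem hFS hGS)
  exact Set.disjoint_left.1 hdisj hyF hyG

theorem Nat.not_eventually_succ_add_one_eq (f : ℕ → ℕ) :
    ¬ ∀ᶠ n in atTop, f (n + 1) + 1 = f n := by
  intro h
  obtain ⟨N, hN⟩ := eventually_atTop.1 h
  have descent : ∀ k, f (N + k) + k = f N := by
    intro k
    induction k with
    | zero => rfl
    | succ k ih =>
      have := hN (N + k) (Nat.le_add_right N k)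
      show f (N + k + 1) + (k + 1) = f N
      omega
  have := descent (f N + 1)
  omega

/-- The shift autohomeomorphism σ* of ℕ* (induced by n ↦ n+1) and its
inverse (σ*)⁻¹ are not conjugate in the group Triv of trivial autohomeomorphisms. -/
theorem shift_not_conjugate_to_inverse_in_Triv
    (s : Equiv.Perm FreeUF)
    (hs : ∀ u : FreeUF, ((s u : FreeUF) : Ultrafilter ℕ) =
      Ultrafilter.map (fun n => n + 1) (u : Ultrafilter ℕ)) :
    ¬ ∃ t : Equiv.Perm FreeUF, IsTrivial t ∧ t⁻¹ * s * t = s⁻¹ := by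
  rintro ⟨t, ⟨f, A, B, hA, -, hf, ht⟩, hconj⟩
  have hsts : s * t * s = t := by simpa [mul_assoc] using congrArg (t * · * s) hconj
  have hmap : ∀ u : Ultrafilter ℕ, (u : Filter ℕ) ≤ cofinite →
      u.map (fun n => f (n + 1) + 1) = u.map f := by
    intro u hu
    have := congrArg (fun e : Equiv.Perm FreeUF => (e ⟨u, hu⟩ : Ultrafilter ℕ)) hsts
    simp only [Equiv.Perm.mul_apply, hs, ht, Ultrafilter.map_map] at this
    exact this
  have hA' : A ∈ cofinite := hA
  have hAsucc : (· + 1) ⁻¹' A ∈ cofinite := (add_left_injective 1).tendsto_cofinite hA'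
  have hinj : InjOn (fun n => f (n + 1) + 1) ((· + 1) ⁻¹' A ∩ A) := fun a ha b hb hab =>
    Nat.succ_injective (hf.injOn ha.1 hb.1 (Nat.succ_injective hab))
  refine Nat.not_eventually_succ_add_one_eq f ?_
  rw [← Nat.cofinite_eq_atTop]
  exact eventuallyEq_cofinite_of_ultrafilter_map_eq (inter_mem hAsucc hA') hinj
    (hf.injOn.mono inter_subset_right) hmap
end
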